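/- arXiv:2605.29722 — 5 statements merged into one kernel-verified Lean document; each statement's English description precedes it below -/
import Mathlib

section
/- Let R be an associative unital ring (not necessarily commutative), α : ℤ → R a family of elements, and S_s^k(n) the associated non-commutative Svinin polynomials. Then for all integers k ≥ 1, s ≥ 1 and all n ∈ ℤ, S_s^k(n) equals the sum, over all weakly increasing tuples 0 ≤ λ_1 ≤ λ_2 ≤ … ≤ λ_k ≤ s−1 of integers, of the ordered products α_{n−k−λ_1+1} · α_{n−k−λ_2+2} · ⋯ · α_{n−λ_k} (the factor with index j appearing in position j of the product, j = 1, …, k). -/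
/-!
Unfolding the recursion once, the `j`-th term of the sum defining `S_s^{k+1}(n)` accounts for
the tuples with `λ_1 = j`: the remaining entries shifted down by `j` form a weakly increasing
tuple with entries `< s - j`, the factor `α_{n-(k+1)-j+1}` is the first factor of the ordered
product, and the remaining factors form the product attached to the shifted tuple at `n - j`.
The formula then follows by induction on `k`.
-/

/-- Non-commutative Svinin polynomials: `svinin α s k n` is `S_s^k(n)`, defined by
`S_s^0(n) = 1` and `S_s^k(n) = Σ_{j=0}^{s−1} α_{n−k−j+1} · S_{s−j}^{k−1}(n−j)` for `k ≥ 1`. -/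
def svinin {R : Type*} [Ring R] (α : ℤ → R) : ℕ → ℕ → ℤ → R
  | _, 0, _ => 1
  | s, k + 1, n =>
      ∑ j ∈ Finset.range s,
        α (n - ((k : ℤ) + 1) - (j : ℤ) + 1) * svinin α (s - j) k (n - (j : ℤ))

namespace Svinin

variable {k s : ℕ}

def consShift (j : Fin s) (μ : Fin k → Fin (s - j)) : Fin (k + 1) → Fin s :=
  Fin.cons j fun i => ⟨j + μ i, by have := (μ i).isLt; omega⟩

def tailShift (l : Fin (k + 1) → Fin s) : Fin k → Fin (s - l 0) :=
  fun i => ⟨l i.succ - l 0, by have := (l i.succ).isLt; omega⟩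

lemma monotone_consShift {j : Fin s} {μ : Fin k → Fin (s - j)} (hμ : Monotone μ) :
    Monotone (consShift j μ) := by
  intro a b hab
  cases a using Fin.cases with
  | zero => cases b using Fin.cases <;> simp [consShift, Fin.le_def]
  | succ a =>
    cases b using Fin.cases with
    | zero => simp at hab
    | succ b =>
      have := hμ (Fin.succ_le_succ_iff.mp hab)
      simp only [consShift, Fin.cons_succ, Fin.le_def] at this ⊢
      omega

lemma monotone_tailShift {l : Fin (k + 1) → Fin s} (hl : Monotone l) :
    Monotone (tailShift l) := by
  intro a b hab
  have := hl (Fin.succ_le_succ_iff.mpr hab)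
  simp only [tailShift, Fin.le_def] at this ⊢
  omega

def consShiftEquiv :
    (Σ j : Fin s, {μ : Fin k → Fin (s - j) // Monotone μ}) ≃
      {l : Fin (k + 1) → Fin s // Monotone l} where
  toFun p := ⟨consShift p.1 p.2.1, monotone_consShift p.2.2⟩
  invFun l := ⟨l.1 0, tailShift l.1, monotone_tailShift l.2⟩
  left_inv p := by
    refine Sigma.ext rfl (heq_of_eq (Subtype.ext (funext fun i => Fin.ext ?_)))
    simp [tailShift, consShift]
  right_inv l := by
    refine Subtype.ext (funext fun i => Fin.ext ?_)
    cases i using Fin.cases with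
    | zero => rfl
    | succ i =>
      have := l.2 (Fin.zero_le i.succ)
      simp only [consShift, tailShift, Fin.cons_succ, Fin.le_def] at this ⊢
      omega

variable {R : Type*} [Ring R] (α : ℤ → R)

def monomial (n : ℤ) (l : Fin k → Fin s) : R :=
  (List.ofFn fun i : Fin k => α (n - (k : ℤ) - ((l i : ℕ) : ℤ) + ((i : ℕ) : ℤ) + 1)).prod

lemma monomial_consShift (n : ℤ) (j : Fin s) (μ : Fin k → Fin (s - j)) :
    monomial α n (consShift j μ) =
      α (n - ((k : ℤ) + 1) - (j : ℤ) + 1) * monomial α (n - (j : ℤ)) μ := by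
  rw [monomial, List.ofFn_succ, List.prod_cons]
  simp only [consShift, Fin.cons_zero, Fin.cons_succ, Fin.val_succ, Fin.val_zero]
  congr 1
  · congr 1
    push_cast
    ring
  · refine congrArg List.prod (congrArg List.ofFn (funext fun i => congrArg α ?_))
    push_cast
    ring

theorem svinin_eq_sum_monotone (k s : ℕ) (n : ℤ) :
    svinin α s k n = ∑ l : {l : Fin k → Fin s // Monotone l}, monomial α n l.1 := by
  induction k generalizing s n with
  | zero =>
    have : Unique {l : Fin 0 → Fin s // Monotone l} :=
      ⟨⟨⟨finZeroElim, fun a => a.elim0⟩⟩, fun _ => Subtype.ext (Subsingleton.elim _ _)⟩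
    simp [svinin, monomial]
  | succ k ih =>
    calc svinin α s (k + 1) n
        = ∑ j : Fin s, α (n - ((k : ℤ) + 1) - (j : ℤ) + 1) * svinin α (s - j) k (n - j) :=
          Finset.sum_range _
      _ = ∑ j : Fin s, ∑ μ : {μ : Fin k → Fin (s - j) // Monotone μ},
            monomial α n (consShift j μ.1) := by
          simp only [ih, Finset.mul_sum, monomial_consShift]
      _ = ∑ l : {l : Fin (k + 1) → Fin s // Monotone l}, monomial α n l.1 :=
          (Fintype.sum_sigma' _).symm.trans
            (Fintype.sum_equiv consShiftEquiv _ _ fun _ => rfl)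

end Svinin

theorem svinin_explicit_formula_general {R : Type*} [Ring R] (α : ℤ → R)
    (k s : ℕ) (n : ℤ) :
    svinin α s k n =
      ∑ l ∈ Finset.univ.filter (fun l : Fin k → Fin s => ∀ i j : Fin k, i ≤ j → l i ≤ l j),
        (List.ofFn (fun i : Fin k =>
          α (n - (k : ℤ) - ((l i : ℕ) : ℤ) + ((i : ℕ) : ℤ) + 1))).prod := by
  rw [Svinin.svinin_eq_sum_monotone]
  exact (Finset.sum_subtype _ (fun l => by simp [Monotone]) (Svinin.monomial α n)).symm

/-- Explicit formula: for `k, s ≥ 1`, `S_s^k(n)` is the sum over all weakly increasing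
tuples `0 ≤ λ_1 ≤ ⋯ ≤ λ_k ≤ s − 1` of the ordered products
`α_{n−k−λ_1+1} · α_{n−k−λ_2+2} · ⋯ · α_{n−λ_k}`. -/
theorem svinin_explicit_formula {R : Type*} [Ring R] (α : ℤ → R)
    (k s : ℕ) (hk : 1 ≤ k) (hs : 1 ≤ s) (n : ℤ) :
    svinin α s k n =
      ∑ l ∈ Finset.univ.filter (fun l : Fin k → Fin s => ∀ i j : Fin k, i ≤ j → l i ≤ l j),
        (List.ofFn (fun i : Fin k =>
          α (n - (k : ℤ) - ((l i : ℕ) : ℤ) + ((i : ℕ) : ℤ) + 1))).prod :=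
  svinin_explicit_formula_general α k s n
end

section
/- Let R be an associative unital ring (not necessarily commutative), α : ℤ → R a family of elements, and S_s^k(n) the associated non-commutative Svinin polynomials. Then for all integers k ≥ 1, s ≥ 1 and all n ∈ ℤ, S_s^k(n) = S_{s−1}^k(n) + S_s^{k−1}(n−1) · α_{n−s+1}. -/
/-!
Induction on `k`, the case `k = 1` being the last term of the defining sum. For `k + 1`,
expand `S_{s+1}^{k+1}(n)` by its definition and apply the induction hypothesis to each
summand `S_{s+1-j}^{k}(n-j)`. The first halves reassemble into `S_s^{k+1}(n)` (the extra
summand `j = s` carries `S_0^k = 0`); in the second halves the trailing factor is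
`α_{(n-j)-(s-j)} = α_{n-s}`, independent of `j`, so it factors out on the right and leaves
`S_{s+1}^{k}(n-1)`.
-/

section

variable {R : Type*} [Ring R] (α : ℤ → R)

@[simp]
lemma svinin_zero_right (s : ℕ) (n : ℤ) : svinin α s 0 n = 1 := by
  simp [svinin]

lemma svinin_succ (s k : ℕ) (n : ℤ) :
    svinin α s (k + 1) n = ∑ j ∈ Finset.range s,
      α (n - ((k : ℤ) + 1) - (j : ℤ) + 1) * svinin α (s - j) k (n - (j : ℤ)) := by
  rw [svinin]

@[simp]
lemma svinin_zero_succ (k : ℕ) (n : ℤ) : svinin α 0 (k + 1) n = 0 := by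
  simp [svinin_succ]

lemma svinin_succ_succ (k s : ℕ) (n : ℤ) :
    svinin α (s + 1) (k + 1) n =
      svinin α s (k + 1) n + svinin α (s + 1) k (n - 1) * α (n - (s : ℤ)) := by
  induction k generalizing s n with
  | zero =>
    rw [svinin_succ, svinin_succ, Finset.sum_range_succ]
    simp only [svinin_zero_right, mul_one, one_mul, Nat.cast_zero, add_tsub_cancel_left]
    congr 2
    ring
  | succ k ih =>
    set β : ℕ → R := fun j ↦ α (n - ((k + 1 : ℕ) + 1 : ℤ) - j + 1)
    have summand (j : ℕ) (hj : j ≤ s) :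
        β j * svinin α (s + 1 - j) (k + 1) (n - j) =
          β j * svinin α (s - j) (k + 1) (n - j) +
            β j * svinin α (s + 1 - j) k (n - j - 1) * α (n - s) := by
      rw [Nat.sub_add_comm hj, ih, Nat.cast_sub hj, sub_sub_sub_cancel_right, mul_add,
        mul_assoc]
    have first : ∑ j ∈ Finset.range (s + 1), β j * svinin α (s - j) (k + 1) (n - j) =
        svinin α s (k + 2) n := by
      rw [Finset.sum_range_succ, Nat.sub_self, svinin_zero_succ, mul_zero, add_zero,
        svinin_succ]
    have second : ∑ j ∈ Finset.range (s + 1), β j * svinin α (s + 1 - j) k (n - j - 1) =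
        svinin α (s + 1) (k + 1) (n - 1) := by
      rw [svinin_succ]
      refine Finset.sum_congr rfl fun j _ ↦ ?_
      simp only [β]
      congr 2 <;> push_cast <;> ring
    rw [svinin_succ, Finset.sum_congr rfl fun j hj ↦ summand j (Finset.mem_range_succ_iff.mp hj),
      Finset.sum_add_distrib, ← Finset.sum_mul, first, second]

end

/-- For `k, s ≥ 1`: `S_s^k(n) = S_{s−1}^k(n) + S_s^{k−1}(n−1) · α_{n−s+1}`. -/
theorem svinin_rec_right {R : Type*} [Ring R] (α : ℤ → R)
    (k s : ℕ) (hk : 1 ≤ k) (hs : 1 ≤ s) (n : ℤ) :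
    svinin α s k n =
      svinin α (s - 1) k n + svinin α s (k - 1) (n - 1) * α (n - (s : ℤ) + 1) := by
  obtain ⟨k, rfl⟩ := Nat.exists_eq_add_of_le' hk
  obtain ⟨s, rfl⟩ := Nat.exists_eq_add_of_le' hs
  rw [svinin_succ_succ, Nat.add_sub_cancel, Nat.add_sub_cancel, Nat.cast_succ,
    sub_add_eq_sub_sub, sub_add_cancel]
end

section
/- Let R be an associative unital ring (not necessarily commutative), α : ℤ → R a family of elements, and S_s^k(n) the associated non-commutative Svinin polynomials. Let m ≥ 1 be an integer and let d_{2k} (0 ≤ k ≤ m) and c_{2k+1} (0 ≤ k ≤ m) be central elements of R. Define, for 0 ≤ k ≤ m and n ∈ ℤ, B_{2k+1,n} := c_{2k+1} − Σ_{r=1}^{m−k} d_{2(k+r)} · S_r^r(n+r−1), P_{2k,n} := Σ_{r=0}^{m−k} d_{2(k+r)} · S_{r+1}^r(n+r−1), and D_{k,n} := −(d_{2k} + 2·c_{2k+1}) + P_{2k,n} + B_{2k+1,n} + B_{2k+1,n−1}. Then for every 0 ≤ k ≤ m and every n ∈ ℤ, α_n · B_{2k+1,n} − B_{2k+1,n}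 · α_n = α_n · D_{k,n+1} − D_{k,n} · α_n; moreover, if R is commutative then D_{k,n} = 0 for all 0 ≤ k ≤ m and all n ∈ ℤ. -/
/-- `Bcoef α m d c k n` is `B_{2k+1,n} = c_{2k+1} − Σ_{r=1}^{m−k} d_{2(k+r)} · S_r^r(n+r−1)`,
where `d j` stands for `d_{2j}` and `c j` stands for `c_{2j+1}`. -/
def Bcoef {R : Type*} [Ring R] (α : ℤ → R) (m : ℕ) (d c : ℕ → R) (k : ℕ) (n : ℤ) : R :=
  c k - ∑ r ∈ Finset.Icc 1 (m - k), d (k + r) * svinin α r r (n + (r : ℤ) - 1)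

/-- `Pcoef α m d k n` is `P_{2k,n} = Σ_{r=0}^{m−k} d_{2(k+r)} · S_{r+1}^r(n+r−1)`,
where `d j` stands for `d_{2j}`. -/
def Pcoef {R : Type*} [Ring R] (α : ℤ → R) (m : ℕ) (d : ℕ → R) (k : ℕ) (n : ℤ) : R :=
  ∑ r ∈ Finset.range (m - k + 1), d (k + r) * svinin α (r + 1) r (n + (r : ℤ) - 1)

/-- `Dcoef α m d c k n` is `D_{k,n} = −(d_{2k} + 2c_{2k+1}) + P_{2k,n} + B_{2k+1,n} + B_{2k+1,n−1}`. -/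
def Dcoef {R : Type*} [Ring R] (α : ℤ → R) (m : ℕ) (d c : ℕ → R) (k : ℕ) (n : ℤ) : R :=
  -(d k + 2 * c k) + Pcoef α m d k n + Bcoef α m d c k n + Bcoef α m d c k (n - 1)

namespace Svinin

open Finset

section Ring

variable {R : Type*} [Ring R] (α : ℤ → R)

def prodFrom : ℕ → ℤ → R
  | 0, _ => 1
  | t + 1, a => α a * prodFrom t (a + 1)

theorem svinin_zero_deg (s : ℕ) (n : ℤ) : svinin α s 0 n = 1 := by
  rw [svinin]

theorem svinin_zero_succ (k : ℕ) (n : ℤ) : svinin α 0 (k + 1) n = 0 := by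
  simp [svinin]

theorem svinin_succ_succ_left (s k : ℕ) (n : ℤ) :
    svinin α (s + 1) (k + 1) n =
      svinin α s (k + 1) (n - 1) + α (n - k) * svinin α (s + 1) k n := by
  rw [svinin, svinin, sum_range_succ']
  congr 1
  · refine sum_congr rfl fun j _ => ?_
    congr 2 <;> push_cast <;> ring
  · simp only [Nat.cast_zero, sub_zero, Nat.sub_zero]
    congr 2
    ring

theorem svinin_succ_succ_right (s k : ℕ) (n : ℤ) :
    svinin α (s + 1) (k + 1) n =
      svinin α s (k + 1) n + svinin α (s + 1) k (n - 1) * α (n - s) := by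
  induction k generalizing s n with
  | zero =>
    simp only [svinin, sum_range_succ, mul_one, one_mul]
    congr 2
    ring
  | succ k ih =>
    rw [svinin.eq_2 α (s + 1) n (k + 1), svinin.eq_2 α s n (k + 1),
      svinin.eq_2 α (s + 1) (n - 1) k, sum_range_succ, sum_range_succ, add_mul,
      sum_mul, ← add_assoc, ← sum_add_distrib]
    congr 1
    · refine sum_congr rfl fun j hj => ?_
      have hjs : j ≤ s := (mem_range.mp hj).le
      rw [Nat.sub_add_comm hjs, ih, mul_add, mul_assoc, Nat.cast_sub hjs]
      congr 4 <;> push_cast <;> ring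
    · have h0 := ih 0 (n - s)
      simp only [svinin_zero_succ, zero_add, Nat.cast_zero, sub_zero] at h0
      rw [Nat.add_sub_cancel_left, h0, mul_assoc]
      congr 3 <;> push_cast <;> ring

theorem svinin_one (q : ℕ) (n : ℤ) : svinin α 1 q n = prodFrom α q (n - q + 1) := by
  induction q generalizing n with
  | zero => rfl
  | succ q ih =>
    rw [svinin.eq_2, sum_range_one, Nat.sub_zero, Nat.cast_zero, sub_zero, sub_zero, ih,
      prodFrom]
    congr 2
    push_cast
    ring

section Coefficients

variable (m : ℕ) (d c : ℕ → R) (k : ℕ)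

theorem Bcoef_eq_sum_range (n : ℤ) :
    Bcoef α m d c k n =
      c k - ∑ i ∈ range (m - k), d (k + (i + 1)) * svinin α (i + 1) (i + 1) (n + i) := by
  rw [Bcoef, ← Ico_add_one_right_eq_Icc, sum_Ico_eq_sum_range, Nat.add_sub_cancel]
  congr 1
  refine sum_congr rfl fun i _ => ?_
  rw [add_comm 1 i]
  congr 2
  push_cast
  ring

theorem Pcoef_eq_sum_range (n : ℤ) :
    Pcoef α m d k n =
      d k + ∑ i ∈ range (m - k), d (k + (i + 1)) * svinin α (i + 1 + 1) (i + 1) (n + i) := by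
  rw [Pcoef, sum_range_succ', svinin_zero_deg, mul_one, add_zero, add_comm]
  congr 1
  refine sum_congr rfl fun i _ => ?_
  congr 2
  push_cast
  ring

theorem Pcoef_add_Bcoef_add_one (n : ℤ) :
    Pcoef α m d k (n + 1) + Bcoef α m d c k (n + 1) = d k + c k +
      ∑ i ∈ range (m - k), d (k + (i + 1)) * (svinin α (i + 1 + 1) i (n + i) * α n) := by
  have hterm (i : ℕ) (_ : i ∈ range (m - k)) :
      d (k + (i + 1)) * svinin α (i + 1 + 1) (i + 1) (n + 1 + i)
        - d (k + (i + 1)) * svinin α (i + 1) (i + 1) (n + 1 + i)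
        = d (k + (i + 1)) * (svinin α (i + 1 + 1) i (n + i) * α n) := by
    rw [← mul_sub, svinin_succ_succ_right, add_sub_cancel_left,
      show n + 1 + i - 1 = n + i by ring,
      show n + 1 + (i : ℤ) - (i + 1 : ℕ) = n by push_cast; ring]
  rw [Pcoef_eq_sum_range, Bcoef_eq_sum_range, ← sum_congr rfl hterm, sum_sub_distrib]
  abel

theorem Pcoef_add_Bcoef_sub_one (n : ℤ) :
    Pcoef α m d k n + Bcoef α m d c k (n - 1) = d k + c k +
      ∑ i ∈ range (m - k), d (k + (i + 1)) * (α n * svinin α (i + 1 + 1) i (n + i)) := by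
  have hterm (i : ℕ) (_ : i ∈ range (m - k)) :
      d (k + (i + 1)) * svinin α (i + 1 + 1) (i + 1) (n + i)
        - d (k + (i + 1)) * svinin α (i + 1) (i + 1) (n - 1 + i)
        = d (k + (i + 1)) * (α n * svinin α (i + 1 + 1) i (n + i)) := by
    rw [← mul_sub, svinin_succ_succ_left, show n + i - 1 = n - 1 + i by ring,
      add_sub_cancel_left, show n + i - i = n by ring]
  rw [Pcoef_eq_sum_range, Bcoef_eq_sum_range, ← sum_congr rfl hterm, sum_sub_distrib]
  abel

theorem alpha_mul_Pcoef_add_Bcoef (hd : ∀ j ≤ m, d j ∈ Set.center R)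
    (hc : c k ∈ Set.center R) (hk : k ≤ m) (n : ℤ) :
    α n * (Pcoef α m d k (n + 1) + Bcoef α m d c k (n + 1)) =
      (Pcoef α m d k n + Bcoef α m d c k (n - 1)) * α n := by
  have comm_alpha {j : ℕ} (hj : j ≤ m) : d j * α n = α n * d j :=
    (Set.mem_center_iff.mp (hd j hj)).comm (α n)
  rw [Pcoef_add_Bcoef_add_one, Pcoef_add_Bcoef_sub_one, mul_add, mul_add, add_mul, add_mul,
    mul_sum, sum_mul, comm_alpha hk, (Set.mem_center_iff.mp hc).comm (α n)]
  congr 1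
  refine sum_congr rfl fun i hi => ?_
  have hi : k + (i + 1) ≤ m := by have := mem_range.mp hi; omega
  rw [← mul_assoc, ← comm_alpha hi]
  noncomm_ring

end Coefficients

end Ring

section CommRing

variable {R : Type*} [CommRing R] (α : ℤ → R)

theorem svinin_succ_add_eq_mul_prodFrom (a t : ℕ) (n : ℤ) :
    svinin α (a + 1) (a + t) n =
      svinin α (a + t + 1) a n * prodFrom α t (n - (a + t : ℕ) + 1) := by
  induction a generalizing t n with
  | zero => rw [zero_add, zero_add, svinin_zero_deg, svinin_one, one_mul]
  | succ a iha =>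
    induction t generalizing n with
    | zero => simp [prodFrom]
    | succ t iht =>
      have hL : svinin α (a + 1 + 1) (a + 1 + (t + 1)) n = svinin α (a + 1) (a + (t + 2)) (n - 1)
          + α (n - (a + 1 + t : ℕ)) * svinin α (a + 1 + 1) (a + 1 + t) n := by
        rw [show a + 1 + (t + 1) = a + 1 + t + 1 by omega, svinin_succ_succ_left,
          show a + 1 + t + 1 = a + (t + 2) by omega]
      have hR : svinin α (a + 1 + (t + 1) + 1) (a + 1) n = svinin α (a + 1 + t + 1) (a + 1) n
          + svinin α (a + (t + 2) + 1) a (n - 1) * α (n - (a + t + 2 : ℕ)) := by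
        rw [show a + 1 + (t + 1) + 1 = a + t + 2 + 1 by omega, svinin_succ_succ_right,
          show a + (t + 2) + 1 = a + t + 2 + 1 by omega, show a + 1 + t + 1 = a + t + 2 by omega]
      rw [hL, hR, iha, iht, prodFrom, prodFrom, prodFrom]
      push_cast
      ring_nf

theorem svinin_succ_self_eq_mul (i : ℕ) (n : ℤ) :
    svinin α (i + 1) (i + 1) (n + i) = α n * svinin α (i + 1 + 1) i (n + i) := by
  rw [svinin_succ_add_eq_mul_prodFrom, prodFrom, prodFrom, mul_one, mul_comm]
  congr 2
  push_cast
  ring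

theorem Dcoef_eq_zero (m : ℕ) (d c : ℕ → R) (k : ℕ) (n : ℤ) : Dcoef α m d c k n = 0 := by
  rw [Dcoef, Bcoef_eq_sum_range α m d c k n]
  simp only [svinin_succ_self_eq_mul]
  linear_combination Pcoef_add_Bcoef_sub_one α m d c k n

end CommRing

end Svinin

theorem dPI_Dterm_identity_general {R : Type*} [Ring R] (α : ℤ → R)
    (m : ℕ) (d c : ℕ → R)
    (hd : ∀ k ≤ m, d k ∈ Set.center R) (hc : ∀ k ≤ m, c k ∈ Set.center R) :
    (∀ k ≤ m, ∀ n : ℤ,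
        α n * Bcoef α m d c k n - Bcoef α m d c k n * α n
          = α n * Dcoef α m d c k (n + 1) - Dcoef α m d c k n * α n) ∧
    ((∀ x y : R, x * y = y * x) → ∀ k ≤ m, ∀ n : ℤ, Dcoef α m d c k n = 0) := by
  refine ⟨fun k hk n => ?_, fun hcomm k _ n => ?_⟩
  · have key := Svinin.alpha_mul_Pcoef_add_Bcoef α m d c k hd (hc k hk) hk n
    have he : d k + 2 * c k ∈ Set.center R :=
      Set.add_mem_center (hd k hk) (Set.mul_mem_center (Set.ofNat_mem_center R 2) (hc k hk))
    symm
    calc α n * Dcoef α m d c k (n + 1) - Dcoef α m d c k n * α n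
        = (α n * (Pcoef α m d k (n + 1) + Bcoef α m d c k (n + 1))
            - (Pcoef α m d k n + Bcoef α m d c k (n - 1)) * α n)
          + (α n * Bcoef α m d c k n - Bcoef α m d c k n * α n)
          - (α n * (d k + 2 * c k) - (d k + 2 * c k) * α n) := by
          rw [Dcoef, Dcoef, add_sub_cancel_right]
          noncomm_ring
      _ = α n * Bcoef α m d c k n - Bcoef α m d c k n * α n := by
          rw [key, (Set.mem_center_iff.mp he).comm (α n)]
          abel
  · let _ : CommRing R := { ‹Ring R› with mul_comm := hcomm }
    exact Svinin.Dcoef_eq_zero α m d c k n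

/-- For `0 ≤ k ≤ m` and all `n`:
`α_n · B_{2k+1,n} − B_{2k+1,n} · α_n = α_n · D_{k,n+1} − D_{k,n} · α_n`; moreover, if `R` is
commutative then `D_{k,n} = 0` for all `0 ≤ k ≤ m` and all `n`. -/
theorem dPI_Dterm_identity {R : Type*} [Ring R] (α : ℤ → R)
    (m : ℕ) (hm : 1 ≤ m) (d c : ℕ → R)
    (hd : ∀ k ≤ m, d k ∈ Set.center R) (hc : ∀ k ≤ m, c k ∈ Set.center R) :
    (∀ k ≤ m, ∀ n : ℤ,
        α n * Bcoef α m d c k n - Bcoef α m d c k n * α n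
          = α n * Dcoef α m d c k (n + 1) - Dcoef α m d c k n * α n) ∧
    ((∀ x y : R, x * y = y * x) → ∀ k ≤ m, ∀ n : ℤ, Dcoef α m d c k n = 0) :=
  dPI_Dterm_identity_general α m d c hd hc
end

section
/- Let R be an associative unital ring (not necessarily commutative), let α, β ∈ R with α invertible, and let t, c ∈ R be central elements. Define β' := t + α + c·α⁻¹ − α⁻¹·β·α and α' := −t + β' − α (the update rule of the system form of the first member of the non-commutative discrete first Painlevé hierarchy). Then the commutator transforms by conjugation: α'·β' − β'·α' = α⁻¹·(α·β − β·α)·α. -/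
/-!
Writing `A := c α⁻¹ - α⁻¹ β α`, the update reads `α' = A` and `β' = t + α + A`, so
`[α', β'] = [A, t] + [A, α] = [A, α]` since `t` is central. As `c` commutes with `α`, the term
`c α⁻¹` commutes with `α`, and `[α⁻¹ β α, α] = α⁻¹ [β, α] α` because conjugation by `α` fixes `α`.
-/

namespace Units

variable {R : Type*} [Ring R]

theorem conj_mul_self_sub_mul_conj (u : Rˣ) (b : R) :
    ↑u⁻¹ * b * u * u - u * (↑u⁻¹ * b * u) = ↑u⁻¹ * (b * u - u * b) * u := by
  rw [← mul_assoc (u : R), ← mul_assoc (u : R), u.mul_inv, one_mul, mul_sub, sub_mul,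
    ← mul_assoc (↑u⁻¹ : R) (u : R), u.inv_mul, one_mul, mul_assoc (↑u⁻¹ : R) b]

theorem commutator_mul_inv_sub_conj (u : Rˣ) {c : R} (hc : Commute c u) (b : R) :
    (c * ↑u⁻¹ - ↑u⁻¹ * b * u) * u - u * (c * ↑u⁻¹ - ↑u⁻¹ * b * u) =
      ↑u⁻¹ * (u * b - b * u) * u := by
  have hcu : c * ↑u⁻¹ * u = u * (c * ↑u⁻¹) :=
    (hc.mul_left (Commute.refl (u : R)).units_inv_left).eq
  rw [sub_mul, mul_sub, hcu, sub_sub_sub_cancel_left, ← neg_sub, conj_mul_self_sub_mul_conj,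
    ← neg_sub (b * (u : R)), mul_neg, neg_mul]

end Units

theorem commutator_add_add_self_of_commute {R : Type*} [Ring R] {a t : R} (h : Commute a t)
    (x : R) : a * (t + x + a) - (t + x + a) * a = a * x - x * a := by
  rw [mul_add, mul_add, add_mul, add_mul, h.eq]
  abel

/-- For the system form of the first member of the non-commutative discrete first Painlevé
hierarchy: with `β' = t + α + c·α⁻¹ − α⁻¹·β·α` and `α' = −t + β' − α` (where `t`, `c` are
central and `αinv` is a two-sided inverse of `α`), the commutator transforms by conjugation:
`α'·β' − β'·α' = α⁻¹·(α·β − β·α)·α`. -/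
theorem dPI1_commutator_conjugation {R : Type*} [Ring R]
    (α β t c αinv : R)
    (hinv1 : α * αinv = 1) (hinv2 : αinv * α = 1)
    (ht : t ∈ Set.center R) (hc : c ∈ Set.center R) :
    let β' := t + α + c * αinv - αinv * β * α
    let α' := -t + β' - α
    α' * β' - β' * α' = αinv * (α * β - β * α) * α := by
  intro β' α'
  let u : Rˣ := ⟨α, αinv, hinv1, hinv2⟩
  set A := c * αinv - αinv * β * α
  have hα' : α' = A := by simp only [α', β', A]; abel
  have hβ' : β' = t + α + A := by simp only [β', A]; abel
  rw [hα', hβ', commutator_add_add_self_of_commute ((Set.mem_center_iff.mp ht).comm A).symm]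
  exact u.commutator_mul_inv_sub_conj ((Set.mem_center_iff.mp hc).comm α) β
end

section
/- Let R be an associative unital ring (not necessarily commutative), let α, β ∈ R with α invertible, and let t, c ∈ R be central elements. Define β' := t + α + c·α⁻¹ − β and α' := −t + β' − α (the update rule of the system form of the alternative non-commutative discrete first Painlevé equation d-PI₁⁰). Then the commutator is preserved: α'·β' − β'·α' = α·β − β·α. -/
/-! The update gives `α' = c·α⁻¹ − β` and `β' = t + α + α'`. In `⁅α', β'⁆` the central `t`
drops out, `⁅α', α'⁆ = 0`, and `c·α⁻¹` commutes with `α`, which leaves `⁅−β, α⁆ = ⁅α, β⁆`. -/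

section

attribute [local instance] LieRing.ofAssociativeRing

theorem lie_sub_add_add_sub_eq_of_mem_center {R : Type*} [Ring R] {α β γ t : R}
    (ht : t ∈ Set.center R) (hαγ : Commute α γ) :
    ⁅γ - β, t + α + γ - β⁆ = ⁅α, β⁆ := by
  have htc : ⁅γ - β, t⁆ = 0 := by
    rw [Ring.lie_def, sub_eq_zero]
    exact (ht.comm _).symm
  have hγα : ⁅γ, α⁆ = 0 := by rw [Ring.lie_def, sub_eq_zero]; exact hαγ.symm
  rw [add_sub_assoc, add_assoc, lie_add, lie_add, htc, lie_self, sub_lie, hγα,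
    ← lie_skew β α]
  abel

end

/-- For the system form of the alternative non-commutative discrete first Painlevé equation
d-PI₁⁰: with `β' = t + α + c·α⁻¹ − β` and `α' = −t + β' − α` (where `t`, `c` are central and
`αinv` is a two-sided inverse of `α`), the commutator is preserved:
`α'·β' − β'·α' = α·β − β·α`. -/
theorem dPI10_commutator_preserved {R : Type*} [Ring R]
    (α β t c αinv : R)
    (hinv1 : α * αinv = 1) (hinv2 : αinv * α = 1)
    (ht : t ∈ Set.center R) (hc : c ∈ Set.center R) :
    let β' := t + α + c * αinv - β
    let α' := -t + β' - α
    α' * β' - β' * α' = α * β - β * α := by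
  intro β' α'
  have hα' : α' = c * αinv - β := by simp only [α', β']; abel
  have hcomm : Commute α (c * αinv) := (hc.comm α).symm.mul_right (hinv1.trans hinv2.symm)
  rw [hα', ← Ring.lie_def, ← Ring.lie_def]
  exact lie_sub_add_add_sub_eq_of_mem_center ht hcomm
end
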